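/- arXiv:2511.06704 — 2 statements merged into one kernel-verified Lean document; each statement's English description precedes it below -/
import Mathlib

section
/- For the qubit phase–dephasing model ρ(φ,Δ), the SLD quantum Fisher information matrix in parameters (φ,Δ) is diagonal: the off-diagonal entry (1/2)Tr[ρ(L_φ L_Δ + L_Δ L_φ)] vanishes. -/
open Matrix

/-- The qubit phase–dephasing state ρ(φ,Δ). -/
noncomputable def rho (φ Δ : ℝ) : Matrix (Fin 2) (Fin 2) ℂ :=
  ((1:ℂ)/2) • !![1, (1 - (Δ:ℂ)) * Complex.exp (Complex.I * φ);
                 (1 - (Δ:ℂ)) * Complex.exp (-(Complex.I * φ)), 1]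

/-- The SLD operator L_φ = i(1-Δ)(e^{-iφ}|1⟩⟨0| - e^{iφ}|0⟩⟨1|). -/
noncomputable def Lphi (φ Δ : ℝ) : Matrix (Fin 2) (Fin 2) ℂ :=
  !![0, -(Complex.I * (1 - (Δ:ℂ)) * Complex.exp (Complex.I * φ));
     Complex.I * (1 - (Δ:ℂ)) * Complex.exp (-(Complex.I * φ)), 0]

/-!
By cyclicity of the trace,
Tr[ρ(L_φ L_Δ + L_Δ L_φ)] = Tr[L_φ (L_Δ ρ + ρ L_Δ)] = 2 Tr[L_φ ∂_Δ ρ].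
Since ρ is affine in Δ, ∂_Δ ρ = -(1/2) G with G = `phaseCoherence φ`, and
Tr[L_φ G] = 0 because the two off-diagonal contributions cancel.
-/

theorem trace_mul_anticommutator_swap {n R : Type*} [Fintype n] [CommRing R]
    (ρ A B : Matrix n n R) :
    (ρ * (A * B + B * A)).trace = (A * (B * ρ + ρ * B)).trace := by
  rw [Matrix.mul_add, Matrix.mul_add, trace_add, trace_add, trace_mul_comm ρ,
    ← Matrix.mul_assoc ρ B A, trace_mul_comm (ρ * B), Matrix.mul_assoc]

noncomputable def phaseCoherence (φ : ℝ) : Matrix (Fin 2) (Fin 2) ℂ :=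
  !![0, Complex.exp (Complex.I * φ); Complex.exp (-(Complex.I * φ)), 0]

theorem rho_apply (φ t : ℝ) (i j : Fin 2) :
    rho φ t i j =
      (1 : Matrix (Fin 2) (Fin 2) ℂ) i j / 2 + (1 - (t : ℂ)) / 2 * phaseCoherence φ i j := by
  fin_cases i <;> fin_cases j <;> simp [rho, phaseCoherence] <;> ring

theorem hasDerivAt_rho_apply (φ Δ : ℝ) (i j : Fin 2) :
    HasDerivAt (fun t : ℝ => rho φ t i j) (-1 / 2 * phaseCoherence φ i j) Δ := by
  simp only [rho_apply]
  have hline : HasDerivAt (fun t : ℝ => (1 - (t : ℂ)) / 2) (-1 / 2) Δ := by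
    simpa using ((hasDerivAt_id Δ).ofReal_comp.const_sub 1).div_const 2
  exact (hline.mul_const (phaseCoherence φ i j)).const_add _

theorem trace_Lphi_mul_phaseCoherence (φ Δ : ℝ) :
    (Lphi φ Δ * phaseCoherence φ).trace = 0 := by
  simp only [trace_fin_two, mul_apply, Fin.sum_univ_two, Lphi, phaseCoherence, of_apply,
    cons_val', cons_val_zero, cons_val_one, cons_val_fin_one, empty_val']
  ring

theorem stmt9_general (φ Δ : ℝ)
    (LΔ : Matrix (Fin 2) (Fin 2) ℂ)
    (hSLD : ∀ i j, HasDerivAt (fun t : ℝ => rho φ t i j)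
      ((((1:ℂ)/2) • (LΔ * rho φ Δ + rho φ Δ * LΔ)) i j) Δ) :
    ((1:ℂ)/2) * (rho φ Δ * (Lphi φ Δ * LΔ + LΔ * Lphi φ Δ)).trace = 0 := by
  have hderiv :
      ((1:ℂ)/2) • (LΔ * rho φ Δ + rho φ Δ * LΔ) = (-1 / 2 : ℂ) • phaseCoherence φ :=
    ext fun i j => (hSLD i j).unique (hasDerivAt_rho_apply φ Δ i j)
  rw [trace_mul_anticommutator_swap, ← smul_eq_mul, ← trace_smul, ← mul_smul_comm,
    hderiv, mul_smul_comm, trace_smul, trace_Lphi_mul_phaseCoherence, smul_zero]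

/-- The SLD quantum Fisher information matrix in (φ,Δ) is diagonal: for any Hermitian
SLD L_Δ for Δ, the off-diagonal entry (1/2)Tr[ρ(L_φ L_Δ + L_Δ L_φ)] vanishes. -/
theorem stmt9 (φ Δ : ℝ) (hΔ : Δ ∈ Set.Ioo (0:ℝ) 1)
    (LΔ : Matrix (Fin 2) (Fin 2) ℂ) (hLΔ : LΔ.IsHermitian)
    (hSLD : ∀ i j, HasDerivAt (fun t : ℝ => rho φ t i j)
      ((((1:ℂ)/2) • (LΔ * rho φ Δ + rho φ Δ * LΔ)) i j) Δ) :
    ((1:ℂ)/2) * (rho φ Δ * (Lphi φ Δ * LΔ + LΔ * Lphi φ Δ)).trace = 0 :=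
  stmt9_general φ Δ LΔ hSLD
end

section
/- Let ρ(θ) be a differentiable family of density matrices, L the SLD for θ, and {Π_k} a POVM whose elements are projectors onto eigenspaces of L with eigenvalues λ_k. Then for each k, ∂_θ Tr[ρΠ_k] = λ_k Tr[ρΠ_k], and the classical Fisher information of the measurement outcomes, Σ_k (∂_θ p_k)²/p_k with p_k = Tr[ρΠ_k], equals Σ_k λ_k² p_k. -/
open Matrix

/-- For a measurement in the spectral projectors {Π_k} of the SLD L (with eigenvalues
λ_k): ∂_θ Tr[ρΠ_k] = λ_k Tr[ρΠ_k], and the classical Fisher information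
Σ_k (∂_θ p_k)²/p_k equals Σ_k λ_k² p_k. -/
theorem stmt16 {n : ℕ} {ι : Type*} [Fintype ι]
    (ρ : ℝ → Matrix (Fin n) (Fin n) ℂ) (θ : ℝ)
    (drho L : Matrix (Fin n) (Fin n) ℂ)
    (lam : ι → ℝ) (Pk : ι → Matrix (Fin n) (Fin n) ℂ)
    (hder : ∀ i j, HasDerivAt (fun t : ℝ => ρ t i j) (drho i j) θ)
    (hSLD : drho = ((1:ℂ)/2) • (L * ρ θ + ρ θ * L))
    (hL : L.IsHermitian)
    (hproj : ∀ k, (Pk k)ᴴ = Pk k ∧ Pk k * Pk k = Pk k)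
    (hsum : ∑ k, Pk k = 1)
    (hspec : L = ∑ k, (lam k : ℂ) • Pk k)
    (heig : ∀ k, L * Pk k = (lam k : ℂ) • Pk k ∧ Pk k * L = (lam k : ℂ) • Pk k)
    (hp : ∀ k, 0 < ((ρ θ * Pk k).trace).re) :
    (∀ k, HasDerivAt (fun t : ℝ => ((ρ t * Pk k).trace).re)
        (lam k * ((ρ θ * Pk k).trace).re) θ) ∧
    (∑ k, (lam k * ((ρ θ * Pk k).trace).re)^2 / ((ρ θ * Pk k).trace).re
        = ∑ k, (lam k)^2 * ((ρ θ * Pk k).trace).re) := by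

  constructor
  · intro k
    -- The derivative of the (complex) trace
    have htr : HasDerivAt (fun t : ℝ => (ρ t * Pk k).trace) ((drho * Pk k).trace) θ := by
      have : ∀ t, (ρ t * Pk k).trace = ∑ i, ∑ j, ρ t i j * Pk k j i := by
        intro t; simp [Matrix.trace, Matrix.diag, Matrix.mul_apply]
      simp only [this]
      have : (drho * Pk k).trace = ∑ i, ∑ j, drho i j * Pk k j i := by
        simp [Matrix.trace, Matrix.diag, Matrix.mul_apply]
      rw [this]
      exact HasDerivAt.fun_sum (fun i _ => HasDerivAt.fun_sum (fun j _ =>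
        (hder i j).mul_const _))
    have hval : (drho * Pk k).trace = (lam k : ℂ) * (ρ θ * Pk k).trace := by
      rw [hSLD]
      have h1 : (L * ρ θ * Pk k).trace = (lam k : ℂ) * (ρ θ * Pk k).trace := by
        rw [Matrix.trace_mul_cycle, (heig k).2, Matrix.smul_mul,
          Matrix.trace_smul, smul_eq_mul, Matrix.trace_mul_comm]
      have h2 : (ρ θ * L * Pk k).trace = (lam k : ℂ) * (ρ θ * Pk k).trace := by
        rw [mul_assoc, (heig k).1, Matrix.mul_smul, Matrix.trace_smul, smul_eq_mul]
      rw [Matrix.smul_mul, Matrix.add_mul, Matrix.trace_smul, Matrix.trace_add, h1, h2]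
      simp [smul_eq_mul]; ring
    have hre : HasDerivAt (fun t : ℝ => ((ρ t * Pk k).trace).re)
        (((drho * Pk k).trace).re) θ :=
      Complex.reCLM.hasFDerivAt.comp_hasDerivAt θ htr
    rwa [hval, Complex.re_ofReal_mul] at hre
  · apply Finset.sum_congr rfl
    intro k _
    have h := (hp k).ne'
    field_simp
end
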